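/- arXiv:1412.4599 — 3 statements merged into one kernel-verified Lean document; each statement's English description precedes it below -/
import Mathlib

section
/- Let G be a finite weakly connected digraph with w(G) > 0. Fix a vertex p and define φ(q) = σ(R(p,q)) mod w(G), where R(p,q) is any route from p to q. Then φ is well-defined (independent of the choice of route) and is a surjective digraph homomorphism from G onto the directed cycle C_{w(G)}. -/
/-- A route in a digraph `(V, E)` starting at a vertex `u` is encoded by a list of
steps `(s, w)` where `s = 1` means the edge is traversed forwards into `w` and
`s = -1` means it is traversed backwards. -/
def IsRoute {V : Type*} (E : V → V → Prop) : V → List (ℤ × V) → Prop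
  | _, [] => True
  | u, (s, w) :: t => ((s = 1 ∧ E u w) ∨ (s = -1 ∧ E w u)) ∧ IsRoute E w t

/-- The final vertex of a route starting at `u` with step list `l`. -/
def routeEnd {V : Type*} : V → List (ℤ × V) → V
  | u, [] => u
  | _, (_, w) :: t => routeEnd w t

/-- The weight `σ(R)` of a route: the sum of its signs. -/
def routeWeight {V : Type*} (l : List (ℤ × V)) : ℤ := (l.map Prod.fst).sum

/-- A digraph homomorphism maps arcs to arcs. -/
def IsDigraphHom {V₁ V₂ : Type*} (E₁ : V₁ → V₁ → Prop) (E₂ : V₂ → V₂ → Prop)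
    (φ : V₁ → V₂) : Prop :=
  ∀ u v, E₁ u v → E₂ (φ u) (φ v)

/-- The set `W` of positive weights of closed routes in the digraph `(V, E)`. -/
def closedWeights {V : Type*} (E : V → V → Prop) : Set ℤ :=
  {n : ℤ | 0 < n ∧ ∃ (u : V) (l : List (ℤ × V)),
    IsRoute E u l ∧ routeEnd u l = u ∧ routeWeight l = n}

/-- `g` is the greatest common divisor of the set `S ⊆ ℤ` (with the convention
`gcd ∅ = 0`). -/
def IsSetGcd (S : Set ℤ) (g : ℤ) : Prop :=
  0 ≤ g ∧ (∀ n ∈ S, g ∣ n) ∧ ∀ d : ℤ, (∀ n ∈ S, d ∣ n) → d ∣ g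

/-- Weak connectedness: any two vertices are joined by a route. -/
def WeaklyConnected {V : Type*} (E : V → V → Prop) : Prop :=
  ∀ u v : V, ∃ l : List (ℤ × V), IsRoute E u l ∧ routeEnd u l = v

/-- Arc relation of the directed cycle `Cₙ` on `ZMod n`. -/
def cycleRel (n : ℕ) : ZMod n → ZMod n → Prop := fun i j => j = i + 1

/-- Arc relation of the directed path with vertex set `Fin n`. -/
def pathRel (n : ℕ) : Fin n → Fin n → Prop := fun i j => (i : ℕ) + 1 = (j : ℕ)

/-!
Concatenating a route from `p` to `q` with the reversal of another one gives a closed route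
whose weight is the difference of the two weights, and `w(G)` divides the weight of every
closed route; hence `φ` is well defined, and appending an arc `u → v` shows `φ v = φ u + 1`.
For surjectivity take a closed route of positive weight, a multiple of `w(G)`: since the
partial weights along it move by `±1`, its prefixes realise every weight `0, …, w(G) - 1`.
-/

theorem exists_take_sum_eq_of_forall_le_one (l : List ℤ) (hl : ∀ x ∈ l, x ≤ 1) {k : ℤ}
    (hk₀ : 0 ≤ k) (hk : k ≤ l.sum) : ∃ m, (l.take m).sum = k := by
  induction l generalizing k with
  | nil => exact ⟨0, by simp only [List.take_nil, List.sum_nil] at hk ⊢; omega⟩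
  | cons s t ih =>
    rcases hk₀.eq_or_lt with rfl | hk_pos
    · exact ⟨0, rfl⟩
    have hs : s ≤ 1 := hl s List.mem_cons_self
    obtain ⟨m, hm⟩ := ih (fun x hx => hl x (List.mem_cons_of_mem _ hx)) (k := k - s)
      (by omega) (by rw [List.sum_cons] at hk; omega)
    exact ⟨m + 1, by rw [List.take_succ_cons, List.sum_cons, hm]; ring⟩

section Routes

variable {V : Type*} {E : V → V → Prop}

theorem routeEnd_append (u : V) (l₁ l₂ : List (ℤ × V)) :
    routeEnd u (l₁ ++ l₂) = routeEnd (routeEnd u l₁) l₂ := by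
  induction l₁ generalizing u with
  | nil => rfl
  | cons x t ih => exact ih x.2

theorem routeWeight_append (l₁ l₂ : List (ℤ × V)) :
    routeWeight (l₁ ++ l₂) = routeWeight l₁ + routeWeight l₂ := by
  simp [routeWeight]

theorem routeWeight_cons (s : ℤ) (v : V) (t : List (ℤ × V)) :
    routeWeight ((s, v) :: t) = s + routeWeight t := by
  simp [routeWeight]

theorem isRoute_append (u : V) (l₁ l₂ : List (ℤ × V)) :
    IsRoute E u (l₁ ++ l₂) ↔ IsRoute E u l₁ ∧ IsRoute E (routeEnd u l₁) l₂ := by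
  induction l₁ generalizing u with
  | nil => simp [IsRoute, routeEnd]
  | cons x t ih =>
    simp only [List.cons_append, IsRoute, routeEnd, ih x.2]
    tauto

theorem IsRoute.fst_le_one {u : V} {l : List (ℤ × V)} (h : IsRoute E u l) :
    ∀ x ∈ l, x.1 ≤ 1 := by
  induction l generalizing u with
  | nil => simp
  | cons x t ih =>
    rintro y (_ | ⟨_, hy⟩)
    · rcases h.1 with ⟨hs, _⟩ | ⟨hs, _⟩ <;> omega
    · exact ih h.2 y hy

def routeReverse : V → List (ℤ × V) → List (ℤ × V)
  | _, [] => []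
  | u, (s, v) :: t => routeReverse v t ++ [(-s, u)]

theorem routeEnd_routeReverse (u : V) (l : List (ℤ × V)) :
    routeEnd (routeEnd u l) (routeReverse u l) = u := by
  induction l generalizing u with
  | nil => rfl
  | cons x t ih =>
    rw [routeReverse, routeEnd, routeEnd_append, ih]
    rfl

theorem routeWeight_routeReverse (u : V) (l : List (ℤ × V)) :
    routeWeight (routeReverse u l) = -routeWeight l := by
  induction l generalizing u with
  | nil => rfl
  | cons x t ih =>
    rw [routeReverse, routeWeight_append, ih, routeWeight_cons, routeWeight_cons]
    simp [routeWeight]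

theorem IsRoute.reverse {u : V} {l : List (ℤ × V)} (h : IsRoute E u l) :
    IsRoute E (routeEnd u l) (routeReverse u l) := by
  induction l generalizing u with
  | nil => trivial
  | cons x t ih =>
    obtain ⟨s, v⟩ := x
    rw [routeReverse, routeEnd, isRoute_append, routeEnd_routeReverse]
    refine ⟨ih h.2, ?_, trivial⟩
    rcases h.1 with ⟨rfl, he⟩ | ⟨rfl, he⟩
    · exact Or.inr ⟨rfl, he⟩
    · exact Or.inl ⟨neg_neg 1, he⟩

end Routes

theorem IsSetGcd.nonempty {S : Set ℤ} {g : ℤ} (h : IsSetGcd S g) (hg : 0 < g) : S.Nonempty := by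
  by_contra hS
  have hdvd : g + 1 ∣ g := h.2.2 _ fun n hn => (hS ⟨n, hn⟩).elim
  have := Int.le_of_dvd hg hdvd
  omega

def IsRoutePotential {V : Type*} (E : V → V → Prop) {n : ℕ} (p : V) (φ : V → ZMod n) : Prop :=
  ∀ (q : V) (l : List (ℤ × V)), IsRoute E p l → routeEnd p l = q → φ q = (routeWeight l : ZMod n)

section Potential

variable {V : Type*} {E : V → V → Prop}

/-- Closed routes of negative weight are handled by reversing them. -/
theorem IsSetGcd.dvd_routeWeight_of_closed {g : ℤ} (hg : IsSetGcd (closedWeights E) g)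
    {u : V} {l : List (ℤ × V)} (hl : IsRoute E u l) (hclosed : routeEnd u l = u) :
    g ∣ routeWeight l := by
  rcases lt_trichotomy (routeWeight l) 0 with hneg | hzero | hpos
  · have hrev := hl.reverse
    rw [hclosed] at hrev
    have hrev_end := routeEnd_routeReverse u l
    rw [hclosed] at hrev_end
    refine dvd_neg.mp (hg.2.1 _ ⟨by omega, u, routeReverse u l, hrev, hrev_end, ?_⟩)
    exact routeWeight_routeReverse u l
  · simp [hzero]
  · exact hg.2.1 _ ⟨hpos, u, l, hl, hclosed, rfl⟩

theorem exists_isRoutePotential (hconn : WeaklyConnected E) {n : ℕ}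
    (hclosed : ∀ u l, IsRoute E u l → routeEnd u l = u → (n : ℤ) ∣ routeWeight l) (p : V) :
    ∃ φ : V → ZMod n, IsRoutePotential E p φ := by
  choose r hr hr_end using hconn p
  refine ⟨fun q => (routeWeight (r q) : ZMod n), fun q l hl hl_end => ?_⟩
  have hrev := (hr q).reverse
  have hrev_end := routeEnd_routeReverse p (r q)
  rw [hr_end] at hrev hrev_end
  have hloop : IsRoute E p (l ++ routeReverse p (r q)) := by
    rw [isRoute_append, hl_end]
    exact ⟨hl, hrev⟩
  have hloop_end : routeEnd p (l ++ routeReverse p (r q)) = p := by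
    rw [routeEnd_append, hl_end, hrev_end]
  have hdvd := hclosed p _ hloop hloop_end
  rw [routeWeight_append, routeWeight_routeReverse, ← sub_eq_add_neg] at hdvd
  exact (ZMod.intCast_eq_intCast_iff_dvd_sub _ _ n).2 hdvd

namespace IsRoutePotential

variable {n : ℕ} {p : V} {φ : V → ZMod n}

theorem apply_routeEnd (hφ : IsRoutePotential E p φ) (hconn : WeaklyConnected E)
    {u : V} {l : List (ℤ × V)} (hl : IsRoute E u l) :
    φ (routeEnd u l) = φ u + routeWeight l := by
  obtain ⟨r, hr, hr_end⟩ := hconn p u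
  have hrl : IsRoute E p (r ++ l) := (isRoute_append p r l).2 ⟨hr, hr_end ▸ hl⟩
  rw [hφ _ (r ++ l) hrl (by rw [routeEnd_append, hr_end]), hφ u r hr hr_end, routeWeight_append,
    Int.cast_add]

theorem isDigraphHom (hφ : IsRoutePotential E p φ) (hconn : WeaklyConnected E) :
    IsDigraphHom E (cycleRel n) φ := by
  intro u v huv
  show φ v = φ u + 1
  have h := hφ.apply_routeEnd hconn (l := [(1, v)]) ⟨Or.inl ⟨rfl, huv⟩, trivial⟩
  simpa [routeEnd, routeWeight] using h

theorem surjective [NeZero n] (hφ : IsRoutePotential E p φ) (hconn : WeaklyConnected E)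
    {m : ℤ} (hm : m ∈ closedWeights E) (hnm : (n : ℤ) ≤ m) : Function.Surjective φ := by
  obtain ⟨-, u, l, hl, -, rfl⟩ := hm
  intro y
  have hval : ((y - φ u).val : ℤ) < n := by exact_mod_cast (y - φ u).val_lt
  obtain ⟨k, hk⟩ := exists_take_sum_eq_of_forall_le_one (l.map Prod.fst)
    (by simpa using hl.fst_le_one) (Int.natCast_nonneg (y - φ u).val)
    (hval.le.trans hnm)
  have hprefix : IsRoute E u (l.take k) :=
    ((isRoute_append u _ _).1 ((List.take_append_drop k l).symm ▸ hl)).1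
  refine ⟨routeEnd u (l.take k), ?_⟩
  rw [hφ.apply_routeEnd hconn hprefix, routeWeight, List.map_take, hk, Int.cast_natCast,
    ZMod.natCast_zmod_val, add_sub_cancel]

end IsRoutePotential

end Potential

theorem exists_epimorphism_onto_cycle_general {V : Type*} (E : V → V → Prop)
    (hconn : WeaklyConnected E) (w : ℕ) (hw : 0 < w)
    (hgcd : IsSetGcd (closedWeights E) (w : ℤ)) (p : V) :
    ∃ φ : V → ZMod w,
      (∀ (q : V) (l : List (ℤ × V)), IsRoute E p l → routeEnd p l = q →
        φ q = (routeWeight l : ZMod w)) ∧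
      IsDigraphHom E (cycleRel w) φ ∧ Function.Surjective φ := by
  have : NeZero w := ⟨hw.ne'⟩
  obtain ⟨φ, hφ⟩ := exists_isRoutePotential hconn (fun _ _ => hgcd.dvd_routeWeight_of_closed) p
  obtain ⟨m, hm⟩ := hgcd.nonempty (by exact_mod_cast hw)
  have hwm : (w : ℤ) ≤ m := Int.le_of_dvd hm.1 (hgcd.2.1 m hm)
  exact ⟨φ, hφ, hφ.isDigraphHom hconn, hφ.surjective hconn hm hwm⟩

/-- for a finite weakly connected digraph with `w(G) = w > 0` and a
base vertex `p`, the map `q ↦ σ(R(p,q)) mod w` is well defined and is a surjective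
digraph homomorphism onto the directed cycle `C_w`. -/
theorem exists_epimorphism_onto_cycle {V : Type*} [Fintype V] (E : V → V → Prop)
    (hconn : WeaklyConnected E) (w : ℕ) (hw : 0 < w)
    (hgcd : IsSetGcd (closedWeights E) (w : ℤ)) (p : V) :
    ∃ φ : V → ZMod w,
      (∀ (q : V) (l : List (ℤ × V)), IsRoute E p l → routeEnd p l = q →
        φ q = (routeWeight l : ZMod w)) ∧
      IsDigraphHom E (cycleRel w) φ ∧ Function.Surjective φ :=
  exists_epimorphism_onto_cycle_general E hconn w hw hgcd p
end

section
/- If ψ : G₁ → G₂ is a surjective digraph homomorphism between finite weakly connected digraphs with w(G₁) > 0 and w(G₂) > 0, then w(G₂) divides w(G₁). -/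
/-! A homomorphism carries every closed route of `G₁` to a closed route of `G₂` with the same
weight, so `w(G₂)` divides every weight of a closed route of `G₁`, hence their gcd `w(G₁)`. -/

def mapRoute {V₁ V₂ : Type*} (ψ : V₁ → V₂) (l : List (ℤ × V₁)) : List (ℤ × V₂) :=
  l.map fun p => (p.1, ψ p.2)

section MapRoute

variable {V₁ V₂ : Type*} {E₁ : V₁ → V₁ → Prop} {E₂ : V₂ → V₂ → Prop} {ψ : V₁ → V₂}

lemma IsDigraphHom.isRoute_mapRoute (hψ : IsDigraphHom E₁ E₂ ψ) :
    ∀ {u : V₁} {l : List (ℤ × V₁)}, IsRoute E₁ u l → IsRoute E₂ (ψ u) (mapRoute ψ l)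
  | _, [], _ => trivial
  | _, (_, _) :: _, ⟨hstep, hrest⟩ =>
    ⟨hstep.imp (And.imp_right (hψ _ _)) (And.imp_right (hψ _ _)), hψ.isRoute_mapRoute hrest⟩

lemma routeEnd_mapRoute (ψ : V₁ → V₂) :
    ∀ (u : V₁) (l : List (ℤ × V₁)), routeEnd (ψ u) (mapRoute ψ l) = ψ (routeEnd u l)
  | _, [] => rfl
  | _, (_, w) :: t => routeEnd_mapRoute ψ w t

lemma routeWeight_mapRoute (ψ : V₁ → V₂) (l : List (ℤ × V₁)) :
    routeWeight (mapRoute ψ l) = routeWeight l := by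
  simp only [routeWeight, mapRoute, List.map_map]
  rfl

lemma IsDigraphHom.closedWeights_subset (hψ : IsDigraphHom E₁ E₂ ψ) :
    closedWeights E₁ ⊆ closedWeights E₂ := by
  rintro n ⟨hpos, u, l, hroute, hclosed, rfl⟩
  exact ⟨hpos, ψ u, mapRoute ψ l, hψ.isRoute_mapRoute hroute,
    by rw [routeEnd_mapRoute, hclosed], routeWeight_mapRoute ψ l⟩

end MapRoute

lemma IsSetGcd.dvd_of_subset {S T : Set ℤ} {g h : ℤ} (hS : IsSetGcd S g) (hT : IsSetGcd T h)
    (hST : S ⊆ T) : h ∣ g :=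
  hS.2.2 h fun n hn => hT.2.1 n (hST hn)

theorem weight_dvd_of_epimorphism_general {V₁ V₂ : Type*}
    (E₁ : V₁ → V₁ → Prop) (E₂ : V₂ → V₂ → Prop)
    (ψ : V₁ → V₂) (hψ : IsDigraphHom E₁ E₂ ψ)
    (w₁ w₂ : ℕ)
    (hg₁ : IsSetGcd (closedWeights E₁) (w₁ : ℤ))
    (hg₂ : IsSetGcd (closedWeights E₂) (w₂ : ℤ)) :
    w₂ ∣ w₁ :=
  Int.natCast_dvd_natCast.mp (hg₁.dvd_of_subset hg₂ hψ.closedWeights_subset)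

/-- a surjective digraph homomorphism between finite weakly connected
digraphs of positive weights forces `w(G₂) ∣ w(G₁)`. -/
theorem weight_dvd_of_epimorphism {V₁ V₂ : Type*} [Fintype V₁] [Fintype V₂]
    (E₁ : V₁ → V₁ → Prop) (E₂ : V₂ → V₂ → Prop)
    (hc₁ : WeaklyConnected E₁) (hc₂ : WeaklyConnected E₂)
    (ψ : V₁ → V₂) (hψ : IsDigraphHom E₁ E₂ ψ) (hsurj : Function.Surjective ψ)
    (w₁ w₂ : ℕ) (hw₁ : 0 < w₁) (hw₂ : 0 < w₂)
    (hg₁ : IsSetGcd (closedWeights E₁) (w₁ : ℤ))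
    (hg₂ : IsSetGcd (closedWeights E₂) (w₂ : ℤ)) :
    w₂ ∣ w₁ :=
  weight_dvd_of_epimorphism_general E₁ E₂ ψ hψ w₁ w₂ hg₁ hg₂
end

section
/- If ε : G₁ → G₂ is a digraph homomorphism between finite weakly connected digraphs with w(G₁) = w(G₂) = 0, then d(G₂) ≥ d(G₁), where d denotes the diameter (maximal route weight between pairs of vertices). -/
section RouteMap

variable {V₁ V₂ : Type*} {E₁ : V₁ → V₁ → Prop} {E₂ : V₂ → V₂ → Prop}

theorem IsRoute.map {φ : V₁ → V₂} (hφ : IsDigraphHom E₁ E₂ φ) :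
    ∀ {u : V₁} {l : List (ℤ × V₁)}, IsRoute E₁ u l →
      IsRoute E₂ (φ u) (l.map (Prod.map id φ))
  | _, [], _ => trivial
  | _, (_, _) :: _, ⟨hstep, hrest⟩ =>
    ⟨hstep.imp (And.imp_right (hφ _ _)) (And.imp_right (hφ _ _)), hrest.map hφ⟩

theorem routeWeight_map (φ : V₁ → V₂) (l : List (ℤ × V₁)) :
    routeWeight (l.map (Prod.map id φ)) = routeWeight l := by
  simp [routeWeight, Function.comp_def]

end RouteMap

theorem diameter_le_of_hom_general {V₁ V₂ : Type*}
    (E₁ : V₁ → V₁ → Prop) (E₂ : V₂ → V₂ → Prop)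
    (ε : V₁ → V₂) (hε : IsDigraphHom E₁ E₂ ε)
    (d₁ d₂ : ℤ)
    (hd₁ : IsGreatest {n : ℤ | ∃ (u : V₁) (l : List (ℤ × V₁)),
      IsRoute E₁ u l ∧ routeWeight l = n} d₁)
    (hd₂ : IsGreatest {n : ℤ | ∃ (u : V₂) (l : List (ℤ × V₂)),
      IsRoute E₂ u l ∧ routeWeight l = n} d₂) :
    d₁ ≤ d₂ := by
  obtain ⟨u, l, hl, rfl⟩ := hd₁.1
  exact hd₂.2 ⟨ε u, l.map (Prod.map id ε), hl.map hε, routeWeight_map ε l⟩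

/-- a digraph homomorphism between finite weakly connected digraphs
of weight zero forces `d(G₂) ≥ d(G₁)` for the diameters (maximal route weights). -/
theorem diameter_le_of_hom {V₁ V₂ : Type*} [Fintype V₁] [Fintype V₂]
    (E₁ : V₁ → V₁ → Prop) (E₂ : V₂ → V₂ → Prop)
    (hc₁ : WeaklyConnected E₁) (hc₂ : WeaklyConnected E₂)
    (ε : V₁ → V₂) (hε : IsDigraphHom E₁ E₂ ε)
    (hz₁ : ∀ (u : V₁) (l : List (ℤ × V₁)),
      IsRoute E₁ u l → routeEnd u l = u → routeWeight l = 0)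
    (hz₂ : ∀ (u : V₂) (l : List (ℤ × V₂)),
      IsRoute E₂ u l → routeEnd u l = u → routeWeight l = 0)
    (d₁ d₂ : ℤ)
    (hd₁ : IsGreatest {n : ℤ | ∃ (u : V₁) (l : List (ℤ × V₁)),
      IsRoute E₁ u l ∧ routeWeight l = n} d₁)
    (hd₂ : IsGreatest {n : ℤ | ∃ (u : V₂) (l : List (ℤ × V₂)),
      IsRoute E₂ u l ∧ routeWeight l = n} d₂) :
    d₁ ≤ d₂ :=
  diameter_le_of_hom_general E₁ E₂ ε hε d₁ d₂ hd₁ hd₂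
end
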